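/- Let G be a finite connected undirected graph with positive edge weights w (conductances), let s ≠ t be vertices. Define the weight of a spanning tree T as the product of the weights of its edges, let N* > 0 be the sum of the weights of all spanning trees of G, and for adjacent vertices a, b let N*_{s,t}(a,b) be the sum of the weights of all spanning trees T in which the unique path from s to t in T traverses the edge {a,b} in the direction from a to b. Define f(a,b) := (N*_{s,t}(a,b) − N*_{s,t}(b,a))/N*. Then f is a distribution of currents in which a unit current enters at s and leaves at t, satisfying Kirchhoff's laws and Ohm's law: (i) for every vertex v, ∑_{b adjacent to v} f(v,b) equals 1 if v = s, equals −1 if v = t, and equals 0 otherwise; and (ii) for every closed walk v₀, v₁, …, v_k = v₀ in G, ∑_{i=0}^{k−1} f(v_i, v_{i+1}) / w({v_i, v_{i+1}}) = 0. -/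

import Mathlib

open SimpleGraph

variable {V : Type*}

/-- `T` is a spanning tree of `G`. -/
def IsSpanningTreeOf (T G : SimpleGraph V) : Prop := T ≤ G ∧ T.IsTree

/-- The unique path from `s` to `t` in the tree `T` traverses the edge `{a,b}`
in the direction from `a` to `b`. -/
def PathTraverses (T : SimpleGraph V) (s t a b : V) : Prop :=
  ∃ p : T.Walk s t, p.IsPath ∧ ∃ d ∈ p.darts, d.toProd = (a, b)

/-- The weight of a spanning tree: the product of the weights (conductances) of
its edges. -/
noncomputable def treeWeight (T : SimpleGraph V) (w : Sym2 V → ℝ) : ℝ :=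
  ∏ᶠ e ∈ T.edgeSet, w e

/-!
Kirchhoff's argument. Each spanning tree `T` carries a unit current along its `s`–`t` path; this
satisfies the current law with source `s` and sink `t`, and summing with the weights `w(T)` gives
`N*` times that law.

For Ohm's law, deleting `{a, b}` from a spanning tree whose `s`–`t` path crosses it from `a` to
`b` is a bijection (inverse: adding the edge back) onto the spanning forests with two trees, one
containing `s` and `a`, the other `t` and `b`; it divides the weight by `w{a, b}`. Writing `Φ u`
for the total weight of those two-tree forests with `u` on the side of `s`, this gives
`N* f(a, b) = w{a, b} (Φ a - Φ b)`, so `f / w` is a potential difference and sums to zero around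
every closed walk.
-/

theorem finsum_mem_setOf_eq_sum_ite {α M : Type*} [Fintype α] [AddCommMonoid M] (p : α → Prop)
    [DecidablePred p] (g : α → M) :
    ∑ᶠ x ∈ {x | p x}, g x = ∑ x, if p x then g x else 0 := by
  simp [finsum_eq_sum_of_fintype, finsum_eq_if]

namespace SimpleGraph

variable {G : SimpleGraph V} {u v : V}

namespace Walk

theorem sum_darts_sub {M : Type*} [AddCommGroup M] (g : V → M) (p : G.Walk u v) :
    (p.darts.map fun d => g d.fst - g d.snd).sum = g u - g v := by
  induction p with
  | nil => simp
  | cons h p ih => rw [darts_cons, List.map_cons, List.sum_cons, ih]; abel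

theorem sum_count_darts_sub {R : Type*} [CommRing R] [Fintype V] [DecidableEq V] {w : V}
    (p : G.Walk u w) (v : V) :
    ∑ b, (((p.darts.map Dart.toProd).count (v, b) : R) - (p.darts.map Dart.toProd).count (b, v)) =
      (if v = u then 1 else 0) - if v = w then 1 else 0 := by
  induction p with
  | nil => simp
  | @cons u x w h p ih =>
    simp only [darts_cons, List.map_cons, List.count_cons, beq_iff_eq, Prod.mk.injEq, ite_and,
      Nat.cast_add, Nat.cast_ite, Nat.cast_one, Nat.cast_zero, Finset.sum_sub_distrib,
      Finset.sum_add_distrib, Finset.sum_ite_irrel, Finset.sum_ite_eq,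
      Finset.mem_univ, if_true, Finset.sum_const_zero] at ih ⊢
    simp only [@eq_comm _ u v, @eq_comm _ x v]
    linear_combination ih

theorem IsPath.reachable_deleteEdges_of_mem_darts {p : G.Walk u v} (hp : p.IsPath) {d : G.Dart}
    (hd : d ∈ p.darts) :
    (G.deleteEdges {d.edge}).Reachable u d.fst ∧ (G.deleteEdges {d.edge}).Reachable d.snd v := by
  obtain ⟨p₁, p₂, rfl⟩ := (isSubwalk_toWalk_adj_iff_mem_darts p).mpr hd
  have hnodup := hp.edges_nodup
  simp only [edges_append, Adj.toWalk, edges_cons, edges_nil, List.nodup_append] at hnodup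
  exact ⟨⟨p₁.toDeleteEdge _ fun h ↦ hnodup.1.2.2 _ h _ (List.mem_singleton_self _) rfl⟩,
    ⟨p₂.toDeleteEdge _ fun h ↦ hnodup.2.2 _ (by simp [Dart.edge]) _ h rfl⟩⟩

end Walk

theorem Preconnected.reachable_deleteEdges_or (hG : G.Preconnected) (u v w : V) :
    (G.deleteEdges {s(u, v)}).Reachable w u ∨ (G.deleteEdges {s(u, v)}).Reachable w v := by
  classical
  obtain ⟨P, hP⟩ := hG.exists_isPath w u
  by_cases he : s(u, v) ∈ P.edges
  · have hv := P.snd_mem_support_of_mem_edges he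
    have hu := Walk.endpoint_notMem_support_takeUntil hP hv (P.adj_of_mem_edges he).ne
    exact .inr ⟨(P.takeUntil v hv).toDeleteEdge _
      fun h ↦ hu (Walk.fst_mem_support_of_mem_edges _ h)⟩
  · exact .inl ⟨P.toDeleteEdge _ he⟩

theorem Reachable.sup_edge {x y : V} (hxu : G.Reachable x u) (hvy : G.Reachable v y) :
    (G ⊔ edge u v).Reachable x y := by
  obtain rfl | huv := eq_or_ne u v
  · exact (hxu.trans hvy).mono le_sup_left
  · have huv' : (G ⊔ edge u v).Adj u v := .inr ((edge_adj ..).mpr ⟨.inl ⟨rfl, rfl⟩, huv⟩)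
    exact (hxu.mono le_sup_left).trans (huv'.reachable.trans (hvy.mono le_sup_left))

theorem deleteEdges_sup_edge_of_adj (h : G.Adj u v) :
    G.deleteEdges {s(u, v)} ⊔ edge u v = G := by
  ext x y
  simp only [sup_adj, deleteEdges_adj, edge_adj, Set.mem_singleton_iff, Sym2.eq_iff]
  grind [Adj.ne, Adj.symm]

theorem sup_edge_deleteEdges_of_not_adj (h : ¬G.Adj u v) :
    (G ⊔ edge u v).deleteEdges {s(u, v)} = G := by
  ext x y
  simp only [sup_adj, deleteEdges_adj, edge_adj, Set.mem_singleton_iff, Sym2.eq_iff]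
  grind [Adj.symm]

end SimpleGraph

section

variable {G F T : SimpleGraph V} {s t a b : V}

structure IsSeparatingForest (F G : SimpleGraph V) (s t : V) : Prop where
  le : F ≤ G
  isAcyclic : F.IsAcyclic
  not_reachable : ¬F.Reachable s t
  reachable_or : ∀ v, F.Reachable v s ∨ F.Reachable v t

theorem PathTraverses.adj (h : PathTraverses T s t a b) : T.Adj a b := by
  obtain ⟨-, -, ⟨⟨a', b'⟩, hd⟩, -, hab⟩ := h
  cases hab
  exact hd

theorem pathTraverses_iff_mem_darts (hT : T.IsAcyclic) {P : T.Walk s t} (hP : P.IsPath) :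
    PathTraverses T s t a b ↔ (a, b) ∈ P.darts.map Dart.toProd := by
  refine ⟨fun ⟨p, hp, hab⟩ ↦ ?_, fun hab ↦ ⟨P, hP, List.mem_map.mp hab⟩⟩
  obtain rfl : p = P :=
    congrArg Subtype.val ((hT.subsingleton_path s t).elim ⟨p, hp⟩ ⟨P, hP⟩)
  exact List.mem_map.mpr hab

open Classical in
theorem IsSpanningTreeOf.sum_adj_pathTraverses_sub [Fintype V] [DecidableEq V]
    [DecidableRel G.Adj] (hT : IsSpanningTreeOf T G) (hst : s ≠ t) (v : V) :
    ∑ b ∈ Finset.univ.filter (G.Adj v ·),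
      ((if PathTraverses T s t v b then 1 else 0) -
        (if PathTraverses T s t b v then 1 else 0) : ℝ) =
      if v = s then 1 else if v = t then -1 else 0 := by
  obtain ⟨P, hP⟩ := hT.2.connected.exists_isPath s t
  have htrav (x y : V) := pathTraverses_iff_mem_darts (a := x) (b := y) hT.2.isAcyclic hP
  have hL : (P.darts.map Dart.toProd).Nodup :=
    (Walk.darts_nodup_of_support_nodup hP.support_nodup).map Dart.toProd_injective
  have hcount (x y : V) : (if PathTraverses T s t x y then 1 else 0 : ℝ) =
      (P.darts.map Dart.toProd).count (x, y) := by
    rw [hL.count, htrav]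
    split_ifs <;> simp
  simp only [hcount]
  rw [Finset.sum_filter_of_ne, P.sum_count_darts_sub]
  · split_ifs <;> simp_all
  · intro b _ hb
    by_contra hvb
    rw [List.count_eq_zero.mpr fun h ↦ hvb (hT.1 ((htrav v b).mpr h).adj),
      List.count_eq_zero.mpr fun h ↦ hvb (hT.1 ((htrav b v).mpr h).adj).symm, sub_self] at hb
    exact hb rfl

theorem PathTraverses.reachable_deleteEdges (h : PathTraverses T s t a b) :
    (T.deleteEdges {s(a, b)}).Reachable s a ∧ (T.deleteEdges {s(a, b)}).Reachable b t := by
  obtain ⟨p, hp, ⟨⟨a', b'⟩, hd⟩, hmem, hab⟩ := h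
  cases hab
  exact hp.reachable_deleteEdges_of_mem_darts hmem

theorem IsSpanningTreeOf.isSeparatingForest_deleteEdges (hT : IsSpanningTreeOf T G)
    (h : PathTraverses T s t a b) : IsSeparatingForest (T.deleteEdges {s(a, b)}) G s t := by
  obtain ⟨hsa, hbt⟩ := h.reachable_deleteEdges
  have hab : ¬(T.deleteEdges {s(a, b)}).Reachable a b :=
    isAcyclic_iff_forall_adj_isBridge.mp hT.2.isAcyclic h.adj
  refine ⟨(deleteEdges_le _).trans hT.1, hT.2.isAcyclic.anti (deleteEdges_le _),
    fun hst ↦ hab (hsa.symm.trans (hst.trans hbt.symm)), fun v ↦ ?_⟩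
  exact (hT.2.connected.preconnected.reachable_deleteEdges_or a b v).imp
    (·.trans hsa.symm) (·.trans hbt)

theorem pathTraverses_sup_edge (hst : ¬F.Reachable s t) (ha : F.Reachable a s)
    (hb : F.Reachable b t) : PathTraverses (F ⊔ edge a b) s t a b := by
  have hdel : (F ⊔ edge a b).deleteEdges {s(a, b)} = F :=
    sup_edge_deleteEdges_of_not_adj fun h ↦ hst (ha.symm.trans (h.reachable.trans hb))
  obtain ⟨P, hP⟩ := (ha.symm.sup_edge hb).exists_isPath
  have he : s(a, b) ∈ P.edges := P.mem_edges_of_not_reachable_deleteEdges (by rwa [hdel])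
  obtain ⟨d, hd, hde⟩ := List.mem_map.mp he
  refine ⟨P, hP, d, hd, (dart_edge_eq_mk'_iff.mp hde).resolve_right fun hba ↦ ?_⟩
  have hsb := (hP.reachable_deleteEdges_of_mem_darts hd).1
  rw [hde, hdel, show d.fst = b by rw [hba]] at hsb
  exact hst (hsb.trans hb)

theorem IsSeparatingForest.isSpanningTreeOf_sup_edge (hF : IsSeparatingForest F G s t)
    (hab : G.Adj a b) (ha : F.Reachable a s) (hb : F.Reachable b t) :
    IsSpanningTreeOf (F ⊔ edge a b) G := by
  have hab' : ¬F.Reachable a b := fun h ↦ hF.not_reachable (ha.symm.trans (h.trans hb))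
  refine ⟨sup_le hF.le ((edge_le_iff G).mpr (.inr hab)), ?_,
    hF.isAcyclic.sup_edge_of_not_reachable hab'⟩
  refine (connected_iff_exists_forall_reachable _).mpr ⟨s, fun v ↦ ?_⟩
  rcases hF.reachable_or v with hvs | hvt
  · exact (hvs.mono le_sup_left).symm
  · exact ha.symm.sup_edge (hb.trans hvt.symm)

theorem treeWeight_sup_edge [Finite V] (hne : a ≠ b) (hab : ¬F.Adj a b) (w : Sym2 V → ℝ) :
    treeWeight (F ⊔ edge a b) w = w s(a, b) * treeWeight F w := by
  have he : s(a, b) ∉ F.edgeSet := hab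
  rw [treeWeight, edgeSet_sup, edgeSet_edge_of_ne hne, Set.union_singleton,
    finprod_mem_insert _ he (Set.toFinite _), treeWeight]

end

noncomputable def spanningTreeWeight (G : SimpleGraph V) (w : Sym2 V → ℝ) : ℝ :=
  ∑ᶠ T ∈ {T : SimpleGraph V | IsSpanningTreeOf T G}, treeWeight T w

noncomputable def traversingTreeWeight (G : SimpleGraph V) (w : Sym2 V → ℝ) (s t a b : V) :
    ℝ :=
  ∑ᶠ T ∈ {T : SimpleGraph V | IsSpanningTreeOf T G ∧ PathTraverses T s t a b},
    treeWeight T w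

/-- Divided by `spanningTreeWeight G w`, this is the potential at `u` of the unit current from
`s` to `t`, normalised to vanish at `t`. -/
noncomputable def sourceSideWeight (G : SimpleGraph V) (w : Sym2 V → ℝ) (s t u : V) : ℝ :=
  ∑ᶠ F ∈ {F : SimpleGraph V | IsSeparatingForest F G s t ∧ F.Reachable u s}, treeWeight F w

section

variable {G : SimpleGraph V} {s t a b : V}

theorem sum_adj_traversingTreeWeight_sub [Fintype V] [DecidableEq V] [DecidableRel G.Adj]
    (hst : s ≠ t) (w : Sym2 V → ℝ) (v : V) :
    ∑ b ∈ Finset.univ.filter (G.Adj v ·),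
      (traversingTreeWeight G w s t v b - traversingTreeWeight G w s t b v) =
      (if v = s then 1 else if v = t then -1 else 0) * spanningTreeWeight G w := by
  classical
  simp only [traversingTreeWeight, spanningTreeWeight, finsum_mem_setOf_eq_sum_ite, ite_and,
    ← Finset.sum_sub_distrib, Finset.mul_sum]
  rw [Finset.sum_comm]
  refine Finset.sum_congr rfl fun T _ ↦ ?_
  by_cases hT : IsSpanningTreeOf T G
  · rw [mul_comm, ← hT.sum_adj_pathTraverses_sub hst v, Finset.mul_sum]
    simp only [hT, if_true, mul_sub, mul_boole]
  · simp [hT]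

theorem traversingTreeWeight_eq_mul [Finite V] (hab : G.Adj a b) (w : Sym2 V → ℝ) :
    traversingTreeWeight G w s t a b = w s(a, b) *
      ∑ᶠ F ∈ {F : SimpleGraph V |
        IsSeparatingForest F G s t ∧ F.Reachable a s ∧ F.Reachable b t}, treeWeight F w := by
  have hnadj {F : SimpleGraph V} (hF : IsSeparatingForest F G s t) (ha : F.Reachable a s)
      (hb : F.Reachable b t) : ¬F.Adj a b :=
    fun h ↦ hF.not_reachable (ha.symm.trans (h.reachable.trans hb))
  rw [traversingTreeWeight, mul_finsum_mem]
  symm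
  refine finsum_mem_eq_of_bijOn (· ⊔ edge a b)
    (Set.InvOn.bijOn (f' := (·.deleteEdges {s(a, b)})) ⟨?_, ?_⟩ ?_ ?_) ?_
  · rintro F ⟨hF, ha, hb⟩
    exact sup_edge_deleteEdges_of_not_adj (hnadj hF ha hb)
  · rintro T ⟨-, h⟩
    exact deleteEdges_sup_edge_of_adj h.adj
  · rintro F ⟨hF, ha, hb⟩
    exact ⟨hF.isSpanningTreeOf_sup_edge hab ha hb,
      pathTraverses_sup_edge hF.not_reachable ha hb⟩
  · rintro T ⟨hT, h⟩
    exact ⟨hT.isSeparatingForest_deleteEdges h, h.reachable_deleteEdges.1.symm,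
      h.reachable_deleteEdges.2⟩
  · rintro F ⟨hF, ha, hb⟩
    exact (treeWeight_sup_edge hab.ne (hnadj hF ha hb) w).symm

theorem traversingTreeWeight_sub [Finite V] (hab : G.Adj a b) (w : Sym2 V → ℝ) :
    traversingTreeWeight G w s t a b - traversingTreeWeight G w s t b a =
      w s(a, b) * (sourceSideWeight G w s t a - sourceSideWeight G w s t b) := by
  rw [traversingTreeWeight_eq_mul hab, traversingTreeWeight_eq_mul hab.symm, Sym2.eq_swap,
    ← mul_sub]
  congr 1
  cases nonempty_fintype V
  classical
  simp only [sourceSideWeight, finsum_mem_setOf_eq_sum_ite, ← Finset.sum_sub_distrib]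
  refine Finset.sum_congr rfl fun F _ ↦ ?_
  by_cases hF : IsSeparatingForest F G s t
  · have hside (u : V) : F.Reachable u t ↔ ¬F.Reachable u s :=
      ⟨fun ht hs ↦ hF.not_reachable (hs.symm.trans ht), (hF.reachable_or u).resolve_left⟩
    simp only [hF, hside, true_and]
    split_ifs <;> simp_all
  · simp [hF]

end
theorem weighted_spanning_tree_flow_satisfies_kirchhoff_and_ohm_laws_general
    [Fintype V] [DecidableEq V]
    (G : SimpleGraph V) [DecidableRel G.Adj]
    (w : Sym2 V → ℝ) (hw : ∀ e ∈ G.edgeSet, 0 < w e)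
    (s t : V) (hst : s ≠ t)
    (Nstar : ℝ)
    (hNstar : Nstar = ∑ᶠ T ∈ {T : SimpleGraph V | IsSpanningTreeOf T G}, treeWeight T w)
    (hNpos : 0 < Nstar)
    (NstarDir : V → V → ℝ)
    (hNstarDir : ∀ a b, NstarDir a b =
      ∑ᶠ T ∈ {T : SimpleGraph V | IsSpanningTreeOf T G ∧ PathTraverses T s t a b},
        treeWeight T w)
    (f : V → V → ℝ)
    (hf : ∀ a b, f a b = (NstarDir a b - NstarDir b a) / Nstar) :
    -- (i) Kirchhoff's current law: a unit current enters at `s` and leaves at `t`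
    (∀ v : V, ∑ b ∈ Finset.univ.filter (fun b => G.Adj v b), f v b =
      if v = s then 1 else if v = t then -1 else 0) ∧
    -- (ii) Kirchhoff's voltage law together with Ohm's law along every closed walk
    (∀ v : V, ∀ p : G.Walk v v,
      (p.darts.map (fun d => f d.toProd.1 d.toProd.2 / w s(d.toProd.1, d.toProd.2))).sum
        = 0) := by
  have hN : Nstar = spanningTreeWeight G w := hNstar
  have hflow : ∀ a b, f a b =
      (traversingTreeWeight G w s t a b - traversingTreeWeight G w s t b a) / Nstar := by
    intro a b
    rw [hf, hNstarDir, hNstarDir]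
    rfl
  refine ⟨fun v ↦ ?_, fun v p ↦ ?_⟩
  · simp_rw [hflow, ← Finset.sum_div, sum_adj_traversingTreeWeight_sub hst, ← hN,
      mul_div_cancel_right₀ _ hNpos.ne']
  · have hdart : ∀ d ∈ p.darts, f d.fst d.snd / w s(d.fst, d.snd) =
        sourceSideWeight G w s t d.fst / Nstar - sourceSideWeight G w s t d.snd / Nstar := by
      intro d _
      have hwd := (hw _ (G.mem_edgeSet.mpr d.adj)).ne'
      rw [hflow, traversingTreeWeight_sub d.adj]
      field_simp
    rw [List.map_congr_left hdart, Walk.sum_darts_sub (sourceSideWeight G w s t · / Nstar),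
      sub_self]

theorem weighted_spanning_tree_flow_satisfies_kirchhoff_and_ohm_laws
    [Fintype V] [DecidableEq V]
    (G : SimpleGraph V) [DecidableRel G.Adj] (hG : G.Connected)
    (w : Sym2 V → ℝ) (hw : ∀ e ∈ G.edgeSet, 0 < w e)
    (s t : V) (hst : s ≠ t)
    (Nstar : ℝ)
    (hNstar : Nstar = ∑ᶠ T ∈ {T : SimpleGraph V | IsSpanningTreeOf T G}, treeWeight T w)
    (hNpos : 0 < Nstar)
    (NstarDir : V → V → ℝ)
    (hNstarDir : ∀ a b, NstarDir a b =
      ∑ᶠ T ∈ {T : SimpleGraph V | IsSpanningTreeOf T G ∧ PathTraverses T s t a b},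
        treeWeight T w)
    (f : V → V → ℝ)
    (hf : ∀ a b, f a b = (NstarDir a b - NstarDir b a) / Nstar) :
    -- (i) Kirchhoff's current law: a unit current enters at `s` and leaves at `t`
    (∀ v : V, ∑ b ∈ Finset.univ.filter (fun b => G.Adj v b), f v b =
      if v = s then 1 else if v = t then -1 else 0) ∧
    -- (ii) Kirchhoff's voltage law together with Ohm's law along every closed walk
    (∀ v : V, ∀ p : G.Walk v v,
      (p.darts.map (fun d => f d.toProd.1 d.toProd.2 / w s(d.toProd.1, d.toProd.2))).sum
        = 0) :=
  weighted_spanning_tree_flow_satisfies_kirchhoff_and_ohm_laws_general G w hw s t hst Nstar hNstar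
    hNpos NstarDir hNstarDir f hf
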